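/- arXiv:2511.06534 — 5 statements merged into one kernel-verified Lean document; each statement's English description precedes it below -/
import Mathlib

section
/- Let c = (c_k)_{k≥0} be a sequence of nonzero elements of K satisfying c_{k+1} = c_k·A(k)/B(k+1), where A(j) ≠ 0 and B(j+1) ≠ 0 for all j ≥ 0. Let T_c be the automorphism of K[t] sending t^k to t^k/c_k. Then for any positive integer k, as endomorphisms of K[t]: [t^k] ∘ T_c = T_c ∘ A(θ−1) ∘ ⋯ ∘ A(θ−k) ∘ B(θ)^{-1} ∘ ⋯ ∘ B(θ−(k−1))^{-1} ∘ [t^k], where θ = t·d/dt and the inverses B(θ−j)^{-1} are taken on the ideal (t^k), which they preserve and on which they are invertible. -/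
open Polynomial

/-- The Euler operator `θ = t·d/dt` on the polynomial ring `K[t]`. -/
noncomputable def theta (K : Type*) [CommRing K] : Module.End K (Polynomial K) :=
  (LinearMap.mulLeft K (X : Polynomial K)) ∘ₗ
    (Polynomial.derivative : Polynomial K →ₗ[K] Polynomial K)

/-- Composition `f 0 ∘ f 1 ∘ ⋯ ∘ f (k−1)` of a family of endomorphisms. -/
noncomputable def opProd (K : Type*) [CommRing K]
    (f : ℕ → Module.End K (Polynomial K)) (k : ℕ) : Module.End K (Polynomial K) :=
  ((List.range k).map f).prod

/-- The diagonal automorphism `T_c` of `K[t]` sending `t^k` to `t^k / c_k`. -/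
noncomputable def diagT (K : Type*) [Field K] (c : ℕ → K) : Module.End K (Polynomial K) :=
  (Polynomial.basisMonomials K).constr K fun n => (c n)⁻¹ • (X : Polynomial K) ^ n

section Aux
variable {K : Type*} [Field K]

lemma theta_Xpow (n : ℕ) : theta K (X ^ n) = (n : K) • X ^ n := by
  cases n with
  | zero => simp [theta]
  | succ m =>
    simp only [theta, LinearMap.coe_comp, Function.comp_apply, derivative_X_pow,
      LinearMap.mulLeft_apply]
    push_cast
    ring_nf
    rw [smul_eq_C_mul]
    ring_nf

lemma aeval_theta_Xpow (p : Polynomial K) (a : K) (n : ℕ) :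
    Polynomial.aeval (theta K - a • (1 : Module.End K (Polynomial K))) p (X ^ n : Polynomial K)
      = p.eval ((n : K) - a) • X ^ n := by
  apply Module.End.aeval_apply_of_hasEigenvector
  constructor
  · rw [Module.End.mem_eigenspace_iff]
    simp [theta_Xpow, sub_smul]
  · exact pow_ne_zero n X_ne_zero

lemma opProd_succ (f : ℕ → Module.End K (Polynomial K)) (k : ℕ) :
    opProd K f (k + 1) = opProd K f k * f k := by
  simp [opProd, List.range_succ]

lemma opProd_eig (f : ℕ → Module.End K (Polynomial K)) (lam : ℕ → ℕ → K)
    (h : ∀ j n, f j (X ^ n : Polynomial K) = lam j n • X ^ n) (k n : ℕ) :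
    opProd K f k (X ^ n : Polynomial K) = (∏ j ∈ Finset.range k, lam j n) • X ^ n := by
  induction k with
  | zero => simp [opProd]
  | succ m ih =>
    rw [opProd_succ, Finset.prod_range_succ]
    simp only [Module.End.mul_apply, h, map_smul, ih, smul_smul]
    ring_nf

/-- A diagonal operator sending `X^n` to `d n • X^(s n)`. -/
noncomputable def diagOp (d : ℕ → K) (s : ℕ → ℕ) : Module.End K (Polynomial K) :=
  (Polynomial.basisMonomials K).constr K fun n => d n • (X : Polynomial K) ^ (s n)

lemma diagOp_Xpow (d : ℕ → K) (s : ℕ → ℕ) (n : ℕ) :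
    diagOp d s (X ^ n : Polynomial K) = d n • X ^ (s n) := by
  have := (Polynomial.basisMonomials K).constr_basis K
    (fun n => d n • (X : Polynomial K) ^ (s n)) n
  simpa [diagOp, coe_basisMonomials, X_pow_eq_monomial] using this

lemma diagT_Xpow (c : ℕ → K) (n : ℕ) : diagT K c (X ^ n : Polynomial K) = (c n)⁻¹ • X ^ n := by
  have := (Polynomial.basisMonomials K).constr_basis K
    (fun n => (c n)⁻¹ • (X : Polynomial K) ^ n) n
  simpa [diagT, coe_basisMonomials, X_pow_eq_monomial] using this

lemma key_rec (A B : Polynomial K)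
    (hAB : ∀ k : ℕ, A.eval (k : K) ≠ 0 ∧ B.eval (k : K) ≠ 0)
    (c : ℕ → K) (hc : ∀ k, c k ≠ 0)
    (hrec : ∀ k : ℕ, c (k + 1) = c k * A.eval (k : K) / B.eval ((k : K) + 1)) (k n : ℕ) :
    c (n + k) * ∏ i ∈ Finset.range k, B.eval ((n : K) + i + 1)
      = c n * ∏ i ∈ Finset.range k, A.eval ((n : K) + i) := by
  induction k with
  | zero => simp
  | succ m ih =>
    have hB : B.eval ((n : K) + m + 1) ≠ 0 := by
      have := (hAB (n + m + 1)).2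
      push_cast at this
      simpa [add_assoc] using this
    have hr := hrec (n + m)
    push_cast at hr
    rw [Finset.prod_range_succ, Finset.prod_range_succ, Nat.add_succ, hr]
    push_cast
    field_simp
    linear_combination A.eval ((n:K) + m) * ih

end Aux

/-- Let `c` satisfy `c_{k+1} = c_k·A(k)/B(k+1)` with `A(j), B(j) ≠ 0` for `j ≥ 0`.
Then for any positive integer `k`,
`[t^k] ∘ T_c = T_c ∘ A(θ−1)∘⋯∘A(θ−k) ∘ B(θ)⁻¹∘⋯∘B(θ−(k−1))⁻¹ ∘ [t^k]`,
the inverses being taken on the ideal `(t^k)` which the operators `B(θ−j)` preserve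
and on which they are invertible.  This is expressed as: for every `P`, the element
`t^k·P` has a (unique) preimage `Q ∈ (t^k)` under `B(θ)∘⋯∘B(θ−(k−1))`, and for any
such `Q` one has `t^k·T_c(P) = T_c(A(θ−1)∘⋯∘A(θ−k)(Q))`. -/
theorem stmt4 (K : Type*) [Field K] [CharZero K] (A B : Polynomial K)
    (hAB : ∀ k : ℕ, A.eval (k : K) ≠ 0 ∧ B.eval (k : K) ≠ 0)
    (c : ℕ → K) (hc : ∀ k, c k ≠ 0) (hc0 : c 0 = 1)
    (hrec : ∀ k : ℕ, c (k + 1) = c k * A.eval (k : K) / B.eval ((k : K) + 1))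
    (k : ℕ) (hk : 0 < k) (P : Polynomial K) :
    (∃! Q : Polynomial K, (X : Polynomial K) ^ k ∣ Q ∧
        opProd K (fun j => Polynomial.aeval
          (theta K - (j : K) • (1 : Module.End K (Polynomial K))) B) k Q = X ^ k * P) ∧
      ∀ Q : Polynomial K, (X : Polynomial K) ^ k ∣ Q →
        opProd K (fun j => Polynomial.aeval
          (theta K - (j : K) • (1 : Module.End K (Polynomial K))) B) k Q = X ^ k * P →
        X ^ k * diagT K c P =
          diagT K c (opProd K (fun j => Polynomial.aeval
            (theta K - ((j : K) + 1) • (1 : Module.End K (Polynomial K))) A) k Q) := by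
  classical
  set Bop := opProd K (fun j => Polynomial.aeval
    (theta K - (j : K) • (1 : Module.End K (Polynomial K))) B) k with hBop
  set Aop := opProd K (fun j => Polynomial.aeval
    (theta K - ((j : K) + 1) • (1 : Module.End K (Polynomial K))) A) k with hAop
  set β : ℕ → K := fun m => ∏ j ∈ Finset.range k, B.eval ((m : K) - j) with hβdef
  set α : ℕ → K := fun m => ∏ j ∈ Finset.range k, A.eval ((m : K) - (j + 1)) with hαdef
  have hBX : ∀ n, Bop (X ^ n : Polynomial K) = β n • X ^ n := fun n =>
    opProd_eig _ (fun j m => B.eval ((m : K) - j)) (fun j m => aeval_theta_Xpow B (j : K) m) k n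
  have hAX : ∀ n, Aop (X ^ n : Polynomial K) = α n • X ^ n := fun n =>
    opProd_eig _ (fun j m => A.eval ((m : K) - (j + 1)))
      (fun j m => aeval_theta_Xpow A ((j : K) + 1) m) k n
  -- reindexed products
  have hβval : ∀ n : ℕ, β (n + k) = ∏ i ∈ Finset.range k, B.eval ((n : K) + i + 1) := by
    intro n
    rw [hβdef]
    rw [← Finset.prod_range_reflect (fun i => B.eval ((n : K) + i + 1)) k]
    apply Finset.prod_congr rfl
    intro j hj
    rw [Finset.mem_range] at hj
    have h1 : (1 : ℕ) ≤ k := hk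
    have h2 : j ≤ k - 1 := Nat.le_sub_one_of_lt hj
    congr 1
    push_cast [Nat.cast_sub h2, Nat.cast_sub h1]
    ring
  have hαval : ∀ n : ℕ, α (n + k) = ∏ i ∈ Finset.range k, A.eval ((n : K) + i) := by
    intro n
    rw [hαdef]
    rw [← Finset.prod_range_reflect (fun i => A.eval ((n : K) + i)) k]
    apply Finset.prod_congr rfl
    intro j hj
    rw [Finset.mem_range] at hj
    have h1 : (1 : ℕ) ≤ k := hk
    have h2 : j ≤ k - 1 := Nat.le_sub_one_of_lt hj
    congr 1
    push_cast [Nat.cast_sub h2, Nat.cast_sub h1]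
    ring
  have hβne : ∀ n : ℕ, β (n + k) ≠ 0 := by
    intro n
    rw [hβval]
    apply Finset.prod_ne_zero_iff.2
    intro i _
    have := (hAB (n + i + 1)).2
    push_cast at this
    exact this
  -- diagonal auxiliary operators
  set D : Module.End K (Polynomial K) := diagOp (fun n => (β (n + k))⁻¹) (fun n => n + k) with hD
  set D' : Module.End K (Polynomial K) := diagOp (fun n => (β (n + k))⁻¹) id with hD'
  set Cop : Module.End K (Polynomial K) :=
    diagOp (fun m => if k ≤ m then (β m)⁻¹ else 1) id with hCop
  have hDX : ∀ n, D (X ^ n : Polynomial K) = (β (n + k))⁻¹ • X ^ (n + k) := fun n =>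
    diagOp_Xpow _ _ n
  have hD'X : ∀ n, D' (X ^ n : Polynomial K) = (β (n + k))⁻¹ • X ^ n := fun n =>
    diagOp_Xpow _ _ n
  have hCX : ∀ n, Cop (X ^ n : Polynomial K) = (if k ≤ n then (β n)⁻¹ else 1) • X ^ n :=
    fun n => diagOp_Xpow _ _ n
  have basisX : ∀ n : ℕ, (Polynomial.basisMonomials K) n = (X : Polynomial K) ^ n := by
    intro n; rw [coe_basisMonomials, X_pow_eq_monomial]
  -- key operator identities
  have h1 : Bop ∘ₗ D = LinearMap.mulLeft K ((X : Polynomial K) ^ k) := by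
    apply (Polynomial.basisMonomials K).ext
    intro n
    simp only [LinearMap.coe_comp, Function.comp_apply, basisX, hDX, map_smul, hBX,
      LinearMap.mulLeft_apply, smul_smul, inv_mul_cancel₀ (hβne n), one_smul,
      ← pow_add, add_comm k n]
  have h2 : Cop ∘ₗ Bop ∘ₗ LinearMap.mulLeft K ((X : Polynomial K) ^ k)
      = LinearMap.mulLeft K ((X : Polynomial K) ^ k) := by
    apply (Polynomial.basisMonomials K).ext
    intro n
    have hkn : k ≤ n + k := Nat.le_add_left k n
    simp only [LinearMap.coe_comp, Function.comp_apply, basisX, LinearMap.mulLeft_apply,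
      ← pow_add, add_comm k n, hBX, map_smul, hCX, if_pos hkn, smul_smul,
      inv_mul_cancel₀ (hβne n), mul_comm, mul_inv_cancel₀ (hβne n), one_smul]
  have h3 : LinearMap.mulLeft K ((X : Polynomial K) ^ k) ∘ₗ diagT K c
      = diagT K c ∘ₗ Aop ∘ₗ D := by
    apply (Polynomial.basisMonomials K).ext
    intro n
    have hkey : c (n + k) * β (n + k) = c n * α (n + k) := by
      rw [hβval, hαval]
      exact key_rec A B hAB c hc hrec k n
    have hscal : (c n)⁻¹ = (β (n + k))⁻¹ * (α (n + k) * (c (n + k))⁻¹) := by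
      field_simp
      rw [div_eq_div_iff (hc n) (mul_ne_zero (hβne n) (hc (n + k)))]
      linear_combination hkey
    simp only [LinearMap.coe_comp, Function.comp_apply, basisX, diagT_Xpow,
      LinearMap.mulLeft_apply, map_smul, hDX, hAX, smul_smul, ← pow_add, add_comm k n]
    rw [hscal]
    ring_nf
  have hDdvd : D = LinearMap.mulLeft K ((X : Polynomial K) ^ k) ∘ₗ D' := by
    apply (Polynomial.basisMonomials K).ext
    intro n
    simp only [LinearMap.coe_comp, Function.comp_apply, basisX, hDX, hD'X, map_smul,
      LinearMap.mulLeft_apply, ← pow_add, add_comm k n]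
  -- the canonical solution
  have hDP1 : (X : Polynomial K) ^ k ∣ D P := by
    refine ⟨D' P, ?_⟩
    rw [hDdvd]; rfl
  have hDP2 : Bop (D P) = X ^ k * P := by
    have := congrFun (congrArg (DFunLike.coe) h1) P
    simpa using this
  -- uniqueness
  have huniq : ∀ Q : Polynomial K, (X : Polynomial K) ^ k ∣ Q → Bop Q = X ^ k * P → Q = D P := by
    intro Q hdvd heq
    obtain ⟨R, hR⟩ := hdvd
    obtain ⟨R', hR'⟩ := hDP1
    have e1 : Cop (Bop Q) = Q := by
      rw [hR]
      have := congrFun (congrArg (DFunLike.coe) h2) R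
      simpa using this
    have e2 : Cop (Bop (D P)) = D P := by
      rw [hR']
      have := congrFun (congrArg (DFunLike.coe) h2) R'
      simpa using this
    rw [← e1, heq, ← hDP2, e2]
  constructor
  · exact ⟨D P, ⟨hDP1, hDP2⟩, fun Q hQ => huniq Q hQ.1 hQ.2⟩
  · intro Q hdvd heq
    rw [huniq Q hdvd heq]
    have := congrFun (congrArg (DFunLike.coe) h3) P
    simpa using this
end

section
/- Let N, r be positive integers and α ∈ K nonzero. If P ∈ K[t] lies in (t−α)^N·K[t] and satisfies Eval_α((θ)^{N+s−1}(P)) = 0 for all s = 1, …, r (where θ = t·d/dt and Eval_α is evaluation at α), then P ∈ (t−α)^{N+r}·K[t]. -/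
/-
Write `P = (t - α)^m Q`. Each application of `θ` lowers the order of vanishing at `α` by one
and multiplies the leading term by `j α`, where `j` is the current order, so
`θ^m P (α) = m! α^m Q(α)`. As `m! α^m ≠ 0`, the vanishing of `θ^m P` at `α` forces `Q(α) = 0`,
i.e. raises the order of vanishing of `P` from `m` to `m + 1`; induct on `r`.
-/

open Polynomial

section

variable {R : Type*} [CommRing R]

lemma theta_apply (P : R[X]) : theta R P = X * derivative P := rfl

lemma theta_X_sub_C_pow_succ_mul (α : R) (k : ℕ) (Q : R[X]) :
    theta R ((X - C α) ^ (k + 1) * Q) =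
      (X - C α) ^ k * (C ((k : R) + 1) * X * Q + (X - C α) * X * derivative Q) := by
  rw [theta_apply, derivative_mul, derivative_pow_succ, derivative_sub, derivative_X,
    derivative_C]
  ring

lemma eval_theta_pow_X_sub_C_pow_mul (α : R) (k : ℕ) (Q : R[X]) :
    eval α ((theta R ^ k) ((X - C α) ^ k * Q)) = k.factorial * α ^ k * eval α Q := by
  induction k generalizing Q with
  | zero => simp
  | succ k ih =>
    rw [pow_succ, Module.End.mul_apply, theta_X_sub_C_pow_succ_mul, ih]
    simp only [eval_add, eval_mul, eval_C, eval_X, eval_sub, sub_self, zero_mul, add_zero,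
      Nat.factorial_succ]
    push_cast
    ring

lemma X_sub_C_pow_succ_dvd_of_eval_theta_pow_eq_zero [IsDomain R] [CharZero R] {α : R}
    (hα : α ≠ 0) {m : ℕ} {P : R[X]} (hP : (X - C α) ^ m ∣ P)
    (h : eval α ((theta R ^ m) P) = 0) : (X - C α) ^ (m + 1) ∣ P := by
  obtain ⟨Q, rfl⟩ := hP
  rw [eval_theta_pow_X_sub_C_pow_mul] at h
  have hQ : eval α Q = 0 :=
    (mul_eq_zero.mp h).resolve_left (mul_ne_zero (Nat.cast_ne_zero.mpr m.factorial_ne_zero)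
      (pow_ne_zero m hα))
  rw [pow_succ]
  exact mul_dvd_mul_left _ (dvd_iff_isRoot.mpr hQ)

end

theorem stmt9_general (K : Type*) [Field K] [CharZero K] (N r : ℕ)
    (α : K) (hα : α ≠ 0) (P : Polynomial K)
    (hP : ((X : Polynomial K) - C α) ^ N ∣ P)
    (h : ∀ s, 1 ≤ s → s ≤ r → Polynomial.eval α ((theta K ^ (N + s - 1)) P) = 0) :
    ((X : Polynomial K) - C α) ^ (N + r) ∣ P := by
  induction r with
  | zero => exact hP
  | succ r ih =>
    have hr : eval α ((theta K ^ (N + r)) P) = 0 := by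
      simpa using h (r + 1) (by omega) le_rfl
    exact X_sub_C_pow_succ_dvd_of_eval_theta_pow_eq_zero hα
      (ih fun s hs₁ hs₂ => h s hs₁ (by omega)) hr

/-- If `P` vanishes to order at least `N` at `α ≠ 0` and `Eval_α(θ^{N+s−1}(P)) = 0`
for `s = 1, …, r`, then `P` vanishes to order at least `N + r` at `α`. -/
theorem stmt9 (K : Type*) [Field K] [CharZero K] (N r : ℕ) (hN : 0 < N) (hr : 0 < r)
    (α : K) (hα : α ≠ 0) (P : Polynomial K)
    (hP : ((X : Polynomial K) - C α) ^ N ∣ P)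
    (h : ∀ s, 1 ≤ s → s ≤ r → Polynomial.eval α ((theta K ^ (N + s - 1)) P) = 0) :
    ((X : Polynomial K) - C α) ^ (N + r) ∣ P :=
  stmt9_general K N r α hα P hP h
end

section
/- Let α ∈ K be nonzero and P ∈ K[t] of the form P(t) = Σ_{j=0}^{r−1} p_j·(t−α)^{N+j}. If Eval_α(θ^{N+s−1}(P)) = 0 for all s = 1, …, r, then P = 0. -/
open Polynomial

lemma theta_apply_s10 {K : Type*} [CommRing K] (Q : Polynomial K) :
    theta K Q = X * derivative Q := rfl

lemma theta_mul {K : Type*} [CommRing K] (f g : Polynomial K) :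
    theta K (f * g) = theta K f * g + f * theta K g := by
  simp only [theta_apply_s10, derivative_mul]; ring

lemma theta_X_pow {K : Type*} [CommRing K] (m : ℕ) :
    theta K (X ^ m : Polynomial K) = (m : Polynomial K) * X ^ m := by
  cases m with
  | zero => simp [theta_apply_s10]
  | succ m =>
    simp only [theta_apply_s10, derivative_X_pow, Nat.succ_sub_one, C_eq_natCast]
    ring

lemma theta_pow_sub {K : Type*} [CommRing K] (α : K) (d : ℕ) :
    theta K ((X - C α) ^ (d+1)) = ((d:Polynomial K)+1) * X * (X - C α)^d := by
  simp only [theta_apply_s10, derivative_pow, Nat.succ_sub_one, derivative_sub,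
    derivative_X, derivative_C, sub_zero, mul_one, C_eq_natCast]
  push_cast
  ring

lemma theta_natCast {K : Type*} [CommRing K] (c : ℕ) :
    theta K (c : Polynomial K) = 0 := by
  simp [theta_apply_s10]

lemma theta_dvd {K : Type*} [CommRing K] (α : K) (n : ℕ) (Q : Polynomial K)
    (h : (X - C α)^(n+1) ∣ Q) : (X - C α)^n ∣ theta K Q := by
  obtain ⟨R, rfl⟩ := h
  rw [theta_apply_s10, derivative_mul, derivative_pow]
  refine ⟨X * ((C ((n:K)+1)) * derivative (X - C α) * R + (X - C α) * derivative R), ?_⟩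
  simp only [Nat.succ_sub_one]
  push_cast
  ring

lemma theta_pow_dvd {K : Type*} [CommRing K] (α : K) : ∀ (m n : ℕ) (Q : Polynomial K),
    (X - C α)^(m+n) ∣ Q → (X - C α)^n ∣ (theta K ^ m) Q := by
  intro m
  induction m with
  | zero => intro n Q h; simpa using h
  | succ m ih =>
    intro n Q h
    rw [pow_succ, Module.End.mul_apply]
    exact ih n _ (theta_dvd α (m+n) Q (by rwa [show m+n+1 = m+1+n by ring]))

lemma theta_pow_diag {K : Type*} [CommRing K] (α : K) : ∀ (m d : ℕ),
    ∃ R : Polynomial K, (theta K ^ m) ((X - C α)^(m+d)) =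
      (Nat.descFactorial (m+d) m : Polynomial K) * X^m * (X - C α)^d
        + (X - C α)^(d+1) * R := by
  intro m
  induction m with
  | zero => intro d; exact ⟨0, by simp⟩
  | succ m ih =>
    intro d
    obtain ⟨R, hR⟩ := ih (d+1)
    refine ⟨(Nat.descFactorial (m+(d+1)) m : Polynomial K) * (m : Polynomial K) * X^m
      + ((d:Polynomial K)+2) * X * R + (X - C α) * theta K R, ?_⟩
    rw [pow_succ', Module.End.mul_apply, show m+1+d = m+(d+1) by ring, hR]
    rw [map_add, theta_mul, theta_mul, theta_natCast, theta_X_pow, theta_pow_sub,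
      theta_mul, show ((X:Polynomial K) - C α)^(d+1+1) = (X - C α)^((d+1)+1) from rfl,
      theta_pow_sub]
    have hc : (Nat.descFactorial (m+(d+1)) (m+1) : Polynomial K)
        = ((d:Polynomial K)+1) * (Nat.descFactorial (m+(d+1)) m : Polynomial K) := by
      rw [Nat.descFactorial_succ, show m+(d+1) - m = d+1 by omega]
      push_cast
      ring
    rw [hc]
    push_cast
    ring

lemma eval_theta_lt {K : Type*} [CommRing K] (α : K) (m k : ℕ) (hmk : m < k) :
    Polynomial.eval α ((theta K ^ m) ((X - C α)^k)) = 0 := by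
  obtain ⟨n, rfl⟩ : ∃ n, k = m + (n+1) := ⟨k - m - 1, by omega⟩
  have hd := theta_pow_dvd α m (n+1) ((X - C α)^(m+(n+1))) dvd_rfl
  obtain ⟨R, hR⟩ := (dvd_pow_self (X - C α) (Nat.succ_ne_zero n)).trans hd
  rw [hR]
  simp

lemma eval_theta_diag {K : Type*} [CommRing K] (α : K) (k : ℕ) :
    Polynomial.eval α ((theta K ^ k) ((X - C α)^k)) = (Nat.factorial k : K) * α^k := by
  obtain ⟨R, hR⟩ := theta_pow_diag α k 0
  rw [show k + 0 = k from rfl] at hR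
  rw [hR]
  simp [Nat.descFactorial_self]

/-- If `P(t) = Σ_{j=0}^{r−1} p_j·(t−α)^{N+j}` with `α ≠ 0` and
`Eval_α(θ^{N+s−1}(P)) = 0` for all `s = 1, …, r`, then `P = 0`. -/
theorem stmt10 (K : Type*) [Field K] [CharZero K] (N r : ℕ) (hN : 0 < N) (hr : 0 < r)
    (α : K) (hα : α ≠ 0) (p : ℕ → K)
    (h : ∀ s, 1 ≤ s → s ≤ r →
      Polynomial.eval α ((theta K ^ (N + s - 1))
        (∑ j ∈ Finset.range r, C (p j) * ((X : Polynomial K) - C α) ^ (N + j))) = 0) :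
    (∑ j ∈ Finset.range r, C (p j) * ((X : Polynomial K) - C α) ^ (N + j)) = 0 := by
  have key : ∀ j, j < r → p j = 0 := by
    intro j
    induction j using Nat.strong_induction_on with
    | _ j ih =>
      intro hj
      have h1 := h (j+1) (by omega) (by omega)
      rw [show N + (j+1) - 1 = N + j by omega] at h1
      rw [map_sum] at h1
      rw [eval_finset_sum] at h1
      have h2 : ∀ i ∈ Finset.range r,
          Polynomial.eval α ((theta K ^ (N+j)) (C (p i) * (X - C α)^(N+i)))
            = p i * Polynomial.eval α ((theta K ^ (N+j)) ((X - C α)^(N+i))) := by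
        intro i _
        rw [← smul_eq_C_mul, map_smul, eval_smul, smul_eq_mul]
      rw [Finset.sum_congr rfl h2] at h1
      rw [Finset.sum_eq_single j] at h1
      · rw [eval_theta_diag] at h1
        have hfac : ((N+j).factorial : K) ≠ 0 := by
          exact_mod_cast Nat.cast_ne_zero.mpr (Nat.factorial_ne_zero _)
        have hpow : α ^ (N+j) ≠ 0 := pow_ne_zero _ hα
        exact (mul_eq_zero.mp h1).resolve_right (mul_ne_zero hfac hpow)
      · intro i hi hij
        rcases Nat.lt_or_ge i j with hlt | hge
        · rw [ih i hlt (by omega), zero_mul]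
        · have : j < i := by omega
          rw [eval_theta_lt α _ _ (by omega), mul_zero]
      · intro hjr
        exact absurd (Finset.mem_range.mpr hj) hjr
  refine Finset.sum_eq_zero fun j hj => ?_
  rw [key j (Finset.mem_range.mp hj), map_zero, zero_mul]
end

section
/- Let ζ be a nonzero rational number which is not a negative integer, n a positive integer, and μ_n(ζ) = den(ζ)^n · ∏_{q prime, q | den(ζ)} q^{⌊n/(q−1)⌋}, where den(ζ) is the denominator of ζ. Then for every integer k with 0 ≤ k ≤ n, the rational number μ_n(ζ)·(ζ)_k/k! is an integer, where (ζ)_k is the Pochhammer symbol. -/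
open Finset

lemma ascPochhammer_eval_prod {R : Type*} [CommRing R] (k : ℕ) (r : R) :
    (ascPochhammer R k).eval r = ∏ i ∈ range k, (r + i) := by
  induction k with
  | zero => simp
  | succ m ih =>
      rw [ascPochhammer_succ_right, Polynomial.eval_mul, ih, prod_range_succ]
      simp

lemma factorial_dvd_prod_int (c : ℤ) (k : ℕ) :
    (k.factorial : ℤ) ∣ ∏ i ∈ range k, (c + i) := by
  have h := Ring.factorial_nsmul_multichoose_eq_ascPochhammer c k
  rw [← Polynomial.ascPochhammer_smeval_cast ℤ, ← Polynomial.eval_eq_smeval,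
    ascPochhammer_eval_prod] at h
  exact ⟨Ring.multichoose c k, by rw [← h]; push_cast [nsmul_eq_mul]; ring⟩

lemma pow_dvd_prod_arith (p : ℕ) (hp : p.Prime) (b : ℕ) (hpb : ¬ p ∣ b) (a : ℤ) (k : ℕ) :
    ((p : ℤ) ^ ((k.factorial).factorization p)) ∣ ∏ i ∈ range k, (a + i * b) := by
  set M := (k.factorial).factorization p with hM
  have hcop : IsCoprime (b : ℤ) ((p : ℤ) ^ M) := by
    rw [Int.isCoprime_iff_gcd_eq_one]
    have : Nat.Coprime b (p ^ M) :=
      Nat.Coprime.pow_right M (Nat.coprime_comm.mp (hp.coprime_iff_not_dvd.mpr hpb))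
    simpa [Int.gcd, Int.natAbs_pow] using this
  obtain ⟨u, v, huv⟩ := hcop
  haveI : NeZero (p ^ M) := ⟨pow_ne_zero M hp.pos.ne'⟩
  set c : ℤ := u * a with hc
  have hmod : (p : ℤ) ^ M ∣ a - (b : ℤ) * c := by
    refine ⟨a * v, ?_⟩
    have : a * (u * (b:ℤ) + v * (p:ℤ) ^ M) = a * 1 := by rw [huv]
    nlinarith [this]
  have hcast : ((∏ i ∈ range k, (a + (i : ℤ) * b) : ℤ) : ZMod (p ^ M)) = 0 := by
    have ha : ((a : ZMod (p ^ M))) = (b : ZMod (p ^ M)) * (c : ZMod (p ^ M)) := by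
      have := (ZMod.intCast_zmod_eq_zero_iff_dvd (a - (b:ℤ)*c) (p ^ M)).mpr (by
        push_cast; exact hmod)
      push_cast at this
      linear_combination this
    calc ((∏ i ∈ range k, (a + (i : ℤ) * b) : ℤ) : ZMod (p ^ M))
        = ∏ i ∈ range k, ((a : ZMod (p ^ M)) + (i : ZMod (p ^ M)) * (b : ZMod (p ^ M))) := by
          push_cast; rfl
      _ = ∏ i ∈ range k, ((b : ZMod (p ^ M)) * ((c : ZMod (p ^ M)) + i)) := by
          refine prod_congr rfl fun i _ => ?_
          rw [ha]; ring
      _ = (b : ZMod (p ^ M)) ^ k * ((∏ i ∈ range k, (c + (i:ℤ)) : ℤ) : ZMod (p ^ M)) := by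
          rw [prod_mul_distrib, prod_const, card_range]; push_cast; ring
      _ = 0 := by
          have h0 : ((p:ℤ)) ^ M ∣ (k.factorial : ℤ) := by
            exact_mod_cast Int.natCast_dvd_natCast.mpr (Nat.ordProj_dvd k.factorial p)
          have h1 : ((p : ℤ) ^ M) ∣ ∏ i ∈ range k, (c + (i:ℤ)) :=
            dvd_trans h0 (factorial_dvd_prod_int c k)
          have h2 := (ZMod.intCast_zmod_eq_zero_iff_dvd (∏ i ∈ range k, (c + (i:ℤ)))
            (p ^ M)).mpr (by push_cast; exact h1)
          rw [h2, mul_zero]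
  have := (ZMod.intCast_zmod_eq_zero_iff_dvd (∏ i ∈ range k, (a + (i:ℤ) * b)) (p ^ M)).mp hcast
  push_cast at this
  exact this

lemma main_dvd (a : ℤ) (b : ℕ) (hb : 0 < b) (n k : ℕ) (hk : k ≤ n)
    (hN : (∏ i ∈ range k, (a + i * b)) ≠ 0) :
    (k.factorial : ℤ) ∣ (b : ℤ) ^ (n - k) * (∏ q ∈ b.primeFactors, q ^ (n / (q - 1)) : ℕ) *
      ∏ i ∈ range k, (a + i * b) := by
  set N : ℤ := ∏ i ∈ range k, (a + i * b) with hNdef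
  set C : ℕ := ∏ q ∈ b.primeFactors, q ^ (n / (q - 1)) with hC
  have hCpos : 0 < C := prod_pos fun q hq => pow_pos (Nat.pos_of_mem_primeFactors hq) _
  rw [show (b : ℤ) ^ (n - k) * (C : ℤ) * N = ((b ^ (n-k) * C : ℕ) : ℤ) * N by push_cast; ring]
  rw [Int.natCast_dvd, Int.natAbs_mul, Int.natAbs_natCast]
  -- now a ℕ statement
  set X : ℕ := b ^ (n - k) * C * N.natAbs with hX
  have hX0 : X ≠ 0 := by
    have : N.natAbs ≠ 0 := Int.natAbs_ne_zero.mpr hN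
    positivity
  rw [← Nat.factorization_le_iff_dvd (Nat.factorial_ne_zero k) hX0]
  intro p
  by_cases hz : (k.factorial).factorization p = 0
  · simp [hz]
  have hp : p.Prime := by
    by_contra h
    exact hz (Nat.factorization_eq_zero_of_not_prime _ h)
  haveI : Fact p.Prime := ⟨hp⟩
  set M := (k.factorial).factorization p with hM
  show M ≤ X.factorization p
  rw [← Nat.Prime.pow_dvd_iff_le_factorization hp hX0]
  by_cases hpb : p ∣ b
  · -- p divides b : use the C factor
    have hMle : M ≤ n / (p - 1) := by
      have hv : M = padicValNat p (k.factorial) := Nat.factorization_def _ hp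
      have hle : (p - 1) * M ≤ n := by
        rw [hv, sub_one_mul_padicValNat_factorial]
        exact le_trans (Nat.sub_le _ _) hk
      exact (Nat.le_div_iff_mul_le (Nat.sub_pos_of_lt hp.one_lt)).mpr (by rwa [mul_comm])
    have hpC : p ^ (n / (p - 1)) ∣ C :=
      dvd_prod_of_mem _ (Nat.mem_primeFactors.mpr ⟨hp, hpb, hb.ne'⟩)
    calc p ^ M ∣ p ^ (n / (p-1)) := pow_dvd_pow p hMle
      _ ∣ C := hpC
      _ ∣ X := ⟨b ^ (n-k) * N.natAbs, by ring⟩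
  · -- p does not divide b
    have h1 : ((p:ℤ) ^ M) ∣ N := pow_dvd_prod_arith p hp b hpb a k
    have h2 : p ^ M ∣ N.natAbs := by
      rw [← Int.natCast_dvd] ; push_cast; exact h1
    exact h2.trans ⟨b ^ (n-k) * C, by ring⟩




/-- `μ_n(ζ) = den(ζ)^n · ∏_{q prime, q | den(ζ)} q^{⌊n/(q−1)⌋}`. -/
def muN (ζ : ℚ) (n : ℕ) : ℕ :=
  ζ.den ^ n * ∏ q ∈ ζ.den.primeFactors, q ^ (n / (q - 1))

/-- For a nonzero rational `ζ` which is not a negative integer, and `0 ≤ k ≤ n`,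
the rational number `μ_n(ζ)·(ζ)_k/k!` is an integer. -/
theorem stmt14 (ζ : ℚ) (hζ : ζ ≠ 0) (hneg : ∀ m : ℕ, ζ ≠ -((m : ℚ) + 1))
    (n : ℕ) (hn : 0 < n) (k : ℕ) (hk : k ≤ n) :
    ∃ z : ℤ, (muN ζ n : ℚ) * (ascPochhammer ℚ k).eval ζ / (Nat.factorial k : ℚ) =
      (z : ℚ) := by
  set a : ℤ := ζ.num with ha
  set b : ℕ := ζ.den with hb
  have hbpos : 0 < b := ζ.pos
  have hbQ : (b : ℚ) ≠ 0 := by positivity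
  have hζeq : ζ = (a : ℚ) / (b : ℚ) := (Rat.num_div_den ζ).symm
  -- each factor nonzero
  have hfac : ∀ i : ℕ, (a + (i : ℤ) * b) ≠ 0 := by
    intro i h
    have h2 : ((a + (i:ℤ) * b : ℤ) : ℚ) = 0 := by rw [h]; simp
    push_cast at h2
    have : ζ = -(i : ℚ) := by
      rw [hζeq, div_eq_iff hbQ]
      linarith
    rcases Nat.eq_zero_or_pos i with hi | hi
    · subst hi; simp at this; exact hζ this
    · obtain ⟨j, rfl⟩ := Nat.exists_eq_add_of_lt hi
      exact hneg j (by rw [this]; push_cast; ring)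
  have hN : (∏ i ∈ range k, (a + i * b)) ≠ 0 :=
    prod_ne_zero_iff.mpr fun i _ => hfac i
  obtain ⟨z, hz⟩ := main_dvd a b hbpos n k hk hN
  refine ⟨z, ?_⟩
  have heval : (ascPochhammer ℚ k).eval ζ =
      ((∏ i ∈ range k, (a + i * b) : ℤ) : ℚ) / (b : ℚ) ^ k := by
    rw [ascPochhammer_eval_prod]
    have hstep : ∀ i ∈ range k, ζ + (i : ℚ) = ((a + (i:ℤ) * b : ℤ) : ℚ) / (b : ℚ) := by
      intro i _
      rw [hζeq]; push_cast; field_simp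
    rw [prod_congr rfl hstep, prod_div_distrib, prod_const, card_range]
    congr 1
    push_cast
    ring
  rw [heval]
  have hkfac : ((k.factorial : ℚ)) ≠ 0 := by positivity
  have hbn : (b:ℚ) ^ n = (b:ℚ) ^ (n - k) * (b:ℚ) ^ k := by
    rw [← pow_add]; congr 1; omega
  have hmu : (muN ζ n : ℚ) = (b:ℚ) ^ n * ((∏ q ∈ b.primeFactors, q ^ (n / (q - 1)) : ℕ) : ℚ) := by
    rw [muN]; push_cast; rfl
  rw [hmu, hbn]
  field_simp
  push_cast
  have hzQ : ((b : ℚ)) ^ (n - k) * ((∏ q ∈ b.primeFactors, q ^ (n / (q - 1)) : ℕ) : ℚ) *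
      ((∏ i ∈ range k, (a + i * b) : ℤ) : ℚ) = (k.factorial : ℚ) * (z : ℚ) := by
    exact_mod_cast congrArg (Int.cast : ℤ → ℚ) hz
  push_cast at hzQ
  linear_combination hzQ
end

section
/- Let d'' > d' ≥ 0 be integers and p a prime satisfying p ≥ e^{d''/(d''−d')}. Then for every positive integer u, u^{d'} · p^{−(d''−d')·v_p(u!)} ≤ p^{d'}, where v_p denotes the p-adic valuation. -/
lemma div_le_padicValNat_factorial (p u : ℕ) [hp : Fact p.Prime] :
    u / p ≤ padicValNat p (Nat.factorial u) := by
  rw [← padicValNat_mul_div_factorial u, padicValNat_factorial_mul]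
  exact Nat.le_add_left _ _

/-- Let `d'' > d' ≥ 0` be integers and `p` a prime with `p ≥ e^{d''/(d''−d')}`.
Then for every positive integer `u`:
`u^{d'} · p^{−(d''−d')·v_p(u!)} ≤ p^{d'}`. -/
theorem stmt17 (d'' d' : ℕ) (h : d' < d'') (p : ℕ) (hp : p.Prime)
    (hpe : Real.exp ((d'' : ℝ) / ((d'' : ℝ) - (d' : ℝ))) ≤ (p : ℝ))
    (u : ℕ) (hu : 0 < u) :
    (u : ℝ) ^ d' *
        (p : ℝ) ^ (-(((d'' : ℝ) - (d' : ℝ)) * (padicValNat p (Nat.factorial u) : ℝ))) ≤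
      (p : ℝ) ^ d' := by
  haveI : Fact p.Prime := ⟨hp⟩
  have hp1 : (1 : ℝ) < (p : ℝ) := by exact_mod_cast hp.one_lt
  have hp0 : (0 : ℝ) < (p : ℝ) := by linarith
  have hK : (0 : ℝ) < (d'' : ℝ) - (d' : ℝ) := by
    have : (d' : ℝ) < (d'' : ℝ) := by exact_mod_cast h
    linarith
  set K : ℝ := (d'' : ℝ) - (d' : ℝ) with hKdef
  set V : ℝ := (padicValNat p (Nat.factorial u) : ℝ) with hVdef
  have hV0 : (0 : ℝ) ≤ V := Nat.cast_nonneg _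
  rcases lt_or_ge u p with hup | hup
  · -- small case : u < p
    have h1 : (u : ℝ) ^ d' ≤ (p : ℝ) ^ d' := by
      apply pow_le_pow_left₀ (by positivity)
      exact_mod_cast hup.le
    have h2 : (p : ℝ) ^ (-(K * V)) ≤ 1 := by
      apply Real.rpow_le_one_of_one_le_of_nonpos hp1.le
      have : 0 ≤ K * V := mul_nonneg hK.le hV0
      linarith
    calc (u : ℝ) ^ d' * (p : ℝ) ^ (-(K * V)) ≤ (u : ℝ) ^ d' * 1 := by
          apply mul_le_mul_of_nonneg_left h2 (by positivity)
      _ = (u : ℝ) ^ d' := by ring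
      _ ≤ (p : ℝ) ^ d' := h1
  · -- large case : u ≥ p
    have hu0 : (0 : ℝ) < (u : ℝ) := by exact_mod_cast hu
    have hpu : (p : ℝ) ≤ (u : ℝ) := by exact_mod_cast hup
    set t : ℝ := Real.log p with htdef
    have ht0 : 0 < t := Real.log_pos hp1
    -- key hypothesis : d'' ≤ K * t
    have hKt : (d'' : ℝ) ≤ K * t := by
      have := (Real.le_log_iff_exp_le hp0).mpr hpe
      calc (d'' : ℝ) = ((d'' : ℝ) / K) * K := by field_simp
        _ ≤ t * K := by apply mul_le_mul_of_nonneg_right this hK.le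
        _ = K * t := by ring
    -- valuation lower bound : (u - p + 1)/p ≤ V
    have hVlb : ((u : ℝ) - (p : ℝ) + 1) / (p : ℝ) ≤ V := by
      have h1 : u / p ≤ padicValNat p (Nat.factorial u) := div_le_padicValNat_factorial p u
      have h2 : u < p * (u / p + 1) := Nat.lt_mul_div_succ u hp.pos
      have h3 : u < p * (u / p) + p := by rwa [Nat.mul_add, Nat.mul_one] at h2
      have h4 : u + 1 ≤ p * (u / p) + p := h3
      have h3' : (u : ℝ) + 1 ≤ (p : ℝ) * ((u / p : ℕ) : ℝ) + (p : ℝ) := by exact_mod_cast h4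
      have h1' : ((u / p : ℕ) : ℝ) ≤ V := by
        rw [hVdef]; exact_mod_cast h1
      have hq : (p : ℝ) * ((u / p : ℕ) : ℝ) ≤ (p : ℝ) * V :=
        mul_le_mul_of_nonneg_left h1' hp0.le
      have hc : V * (p : ℝ) = (p : ℝ) * V := mul_comm _ _
      rw [div_le_iff₀ hp0]
      linarith
    -- log bound : log u ≤ t + (u - p)/p
    have hlog : Real.log u ≤ t + ((u : ℝ) - (p : ℝ)) / p := by
      have h1 : Real.log ((u : ℝ) / p) ≤ (u : ℝ) / p - 1 :=
        Real.log_le_sub_one_of_pos (by positivity)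
      rw [Real.log_div (ne_of_gt hu0) (ne_of_gt hp0)] at h1
      have : (u : ℝ) / p - 1 = ((u : ℝ) - (p : ℝ)) / p := by field_simp
      linarith [this ▸ h1]
    -- main exponent inequality
    have hexp : (d' : ℝ) * Real.log u ≤ ((d' : ℝ) + K * V) * t := by
      have hd'K : (d' : ℝ) ≤ K * t := by
        have : (d' : ℝ) ≤ (d'' : ℝ) := by exact_mod_cast h.le
        linarith
      have hd'0 : (0 : ℝ) ≤ (d' : ℝ) := Nat.cast_nonneg _
      have step1 : (d' : ℝ) * Real.log u ≤ (d' : ℝ) * t + (d' : ℝ) * (((u : ℝ) - p) / p) :=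
        by nlinarith
      have hx0 : (0 : ℝ) ≤ ((u : ℝ) - p) / p := div_nonneg (by linarith) hp0.le
      have step2 : (d' : ℝ) * (((u : ℝ) - p) / p) ≤ K * t * (((u : ℝ) - p + 1) / p) := by
        have a1 : (d' : ℝ) * (((u : ℝ) - p) / p) ≤ K * t * (((u : ℝ) - p) / p) :=
          mul_le_mul_of_nonneg_right hd'K hx0
        have a2 : K * t * (((u : ℝ) - p) / p) ≤ K * t * (((u : ℝ) - p + 1) / p) := by
          gcongr
          linarith
        linarith
      have step3 : K * t * (((u : ℝ) - p + 1) / p) ≤ K * t * V := by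
        apply mul_le_mul_of_nonneg_left hVlb
        positivity
      have hre : ((d' : ℝ) + K * V) * t = (d' : ℝ) * t + K * t * V := by ring
      rw [hre]
      exact step1.trans (add_le_add_right (step2.trans step3) _)
    -- convert to the original inequality
    have hL : (u : ℝ) ^ d' * (p : ℝ) ^ (-(K * V)) =
        Real.exp ((d' : ℝ) * Real.log u - K * V * t) := by
      rw [Real.rpow_def_of_pos hp0, ← Real.exp_log (x := (u : ℝ) ^ d') (by positivity),
        ← Real.exp_add, Real.log_pow]
      rw [htdef]
      ring_nf
    have hR : (p : ℝ) ^ d' = Real.exp ((d' : ℝ) * t) := by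
      rw [← Real.exp_log (x := (p : ℝ) ^ d') (by positivity), Real.log_pow]
    rw [hL, hR]
    apply Real.exp_le_exp.mpr
    nlinarith
end
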